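/- arXiv:1601.01168 — 4 statements merged into one kernel-verified Lean document; each statement's English description precedes it below -/
import Mathlib

section
/- If S and T are finite nonempty semigroups, then the semigroup free product S ⋆ T is an automaton semigroup. -/
/-- A Mealy automaton: finite nonempty state set `Q`, finite nonempty alphabet `B`,
and a transition/output function split into `next` and `out`. -/
structure MealyAutomaton where
  Q : Type
  B : Type
  [fintypeQ : Fintype Q]
  [nonemptyQ : Nonempty Q]
  [fintypeB : Fintype B]
  [nonemptyB : Nonempty B]
  next : Q → B → Q
  out : Q → B → B

namespace MealyAutomaton

/-- The action of a state on finite words over the alphabet. -/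
def act (A : MealyAutomaton) : A.Q → List A.B → List A.B
  | _, [] => []
  | q, b :: w => A.out q b :: A.act (A.next q b) w

end MealyAutomaton

/-- The automaton semigroup `Σ(𝒜)`: the subsemigroup of `List B → List B` (under
composition) generated by the actions of the states. -/
def automatonSemigroup (A : MealyAutomaton) : Subsemigroup (Function.End (List A.B)) :=
  Subsemigroup.closure (Set.range fun q => (A.act q : Function.End (List A.B)))

/-- A semigroup is an automaton semigroup if it is isomorphic to `Σ(𝒜)` for some
Mealy automaton `𝒜`. -/
def IsAutomatonSemigroup (S : Type*) [Mul S] : Prop :=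
  ∃ A : MealyAutomaton, Nonempty (S ≃* automatonSemigroup A)


/-- The defining relations of the semigroup free product. -/
def freeProdRel (S T : Type*) [Mul S] [Mul T] :
    FreeSemigroup (S ⊕ T) → FreeSemigroup (S ⊕ T) → Prop := fun x y =>
  (∃ s s' : S, x = FreeSemigroup.of (Sum.inl s) * FreeSemigroup.of (Sum.inl s') ∧
      y = FreeSemigroup.of (Sum.inl (s * s'))) ∨
  (∃ t t' : T, x = FreeSemigroup.of (Sum.inr t) * FreeSemigroup.of (Sum.inr t') ∧
      y = FreeSemigroup.of (Sum.inr (t * t')))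

/-- The free product `S ⋆ T` of two semigroups: the quotient of the free semigroup on
`S ⊕ T` by the smallest congruence identifying `s·s'` with `ss'` and `t·t'` with `tt'`. -/
def SemigroupFreeProduct (S T : Type*) [Mul S] [Mul T] : Type _ :=
  (conGen (freeProdRel S T)).Quotient

instance (S T : Type*) [Mul S] [Mul T] : Semigroup (SemigroupFreeProduct S T) :=
  inferInstanceAs (Semigroup (conGen (freeProdRel S T)).Quotient)

set_option linter.unusedSectionVars false

namespace FPC

lemma exists_idem (M : Type*) [Semigroup M] [Finite M] [Nonempty M] : ∃ e : M, e * e = e := by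
  letI : TopologicalSpace M := ⊥
  haveI : DiscreteTopology M := ⟨rfl⟩
  exact exists_idempotent_of_compact_t2_of_continuous_mul_left
    (fun r => continuous_of_discreteTopology)

inductive MFlag : Type
  | raw | fresh | blocked
  deriving DecidableEq

instance : Fintype MFlag :=
  ⟨⟨{MFlag.raw, MFlag.fresh, MFlag.blocked}, by decide⟩, fun x => by cases x <;> decide⟩

instance : Nonempty MFlag := ⟨MFlag.raw⟩

variable {S T : Type} [Semigroup S] [Semigroup T]

/-- alphabet -/
abbrev Letter (S T : Type) : Type := (Option S × MFlag) ⊕ (Option T × MFlag)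

/-- `mo s a` is `s` multiplied by optional `a` -/
def mo {M : Type} [Semigroup M] (s : M) : Option M → M
  | none => s
  | some x => s * x

/-- output function -/
def ot : S ⊕ T → Letter S T → Letter S T
  | .inl s, .inl (a, .raw) => .inl (some (mo s a), .fresh)
  | .inl s, .inl (a, .fresh) => .inl (some (mo s a), .fresh)
  | .inl _, .inl (a, .blocked) => .inl (a, .blocked)
  | .inl _, .inr (b, .raw) => .inr (b, .raw)
  | .inl _, .inr (b, .fresh) => .inr (b, .blocked)
  | .inl _, .inr (b, .blocked) => .inr (b, .blocked)
  | .inr t, .inr (b, .raw) => .inr (some (mo t b), .fresh)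
  | .inr t, .inr (b, .fresh) => .inr (some (mo t b), .fresh)
  | .inr _, .inr (b, .blocked) => .inr (b, .blocked)
  | .inr _, .inl (a, .raw) => .inl (a, .raw)
  | .inr _, .inl (a, .fresh) => .inl (a, .blocked)
  | .inr _, .inl (a, .blocked) => .inl (a, .blocked)

/-- transition function -/
def nx (e : S) (f : T) : S ⊕ T → Letter S T → S ⊕ T
  | .inl _, .inl (_, .raw) => .inr f
  | .inl _, .inl (_, .fresh) => .inr f
  | .inl s, .inl (_, .blocked) => .inl s
  | .inl s, .inr _ => .inl s
  | .inr _, .inr (_, .raw) => .inl e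
  | .inr _, .inr (_, .fresh) => .inl e
  | .inr t, .inr (_, .blocked) => .inr t
  | .inr t, .inl _ => .inr t

variable (e : S) (f : T)

/-- the action -/
def mact : S ⊕ T → List (Letter S T) → List (Letter S T)
  | _, [] => []
  | g, ℓ :: w => ot g ℓ :: mact (nx e f g ℓ) w

@[simp] lemma mact_nil (g : S ⊕ T) : mact e f g [] = [] := rfl
@[simp] lemma mact_cons (g : S ⊕ T) (ℓ : Letter S T) (w : List (Letter S T)) :
    mact e f g (ℓ :: w) = ot g ℓ :: mact e f (nx e f g ℓ) w := rfl

/-- key relation lemma -/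
lemma rel_act (he : e * e = e) (hf : f * f = f) : ∀ w : List (Letter S T),
    (∀ x y : S, mact e f (.inl x) (mact e f (.inl y) w) = mact e f (.inl (x * y)) w) ∧
    (∀ x y : T, mact e f (.inr x) (mact e f (.inr y) w) = mact e f (.inr (x * y)) w) := by
  intro w
  induction w with
  | nil => exact ⟨fun _ _ => rfl, fun _ _ => rfl⟩
  | cons ℓ w ih =>
    constructor
    · intro x y
      rcases ℓ with ⟨a, fl⟩ | ⟨b, fl⟩ <;> cases fl
      · simp only [mact_cons, ot, nx]
        congr 1
        · cases a <;> simp [mo, mul_assoc]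
        · have := ih.2 f f; rw [hf] at this; exact this
      · simp only [mact_cons, ot, nx]
        congr 1
        · cases a <;> simp [mo, mul_assoc]
        · have := ih.2 f f; rw [hf] at this; exact this
      · simp only [mact_cons, ot, nx]
        congr 1
        exact ih.1 x y
      · simp only [mact_cons, ot, nx]
        congr 1
        exact ih.1 x y
      · simp only [mact_cons, ot, nx]
        congr 1
        exact ih.1 x y
      · simp only [mact_cons, ot, nx]
        congr 1
        exact ih.1 x y
    · intro x y
      rcases ℓ with ⟨a, fl⟩ | ⟨b, fl⟩ <;> cases fl
      · simp only [mact_cons, ot, nx]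
        congr 1
        exact ih.2 x y
      · simp only [mact_cons, ot, nx]
        congr 1
        exact ih.2 x y
      · simp only [mact_cons, ot, nx]
        congr 1
        exact ih.2 x y
      · simp only [mact_cons, ot, nx]
        congr 1
        · cases b <;> simp [mo, mul_assoc]
        · have := ih.1 e e; rw [he] at this; exact this
      · simp only [mact_cons, ot, nx]
        congr 1
        · cases b <;> simp [mo, mul_assoc]
        · have := ih.1 e e; rw [he] at this; exact this
      · simp only [mact_cons, ot, nx]
        congr 1
        exact ih.2 x y

/-- cascade: apply a reversed word of generators, head = innermost -/
def cascade : List (S ⊕ T) → List (Letter S T) → List (Letter S T)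
  | [], w => w
  | g :: m, w => cascade m (mact e f g w)

@[simp] lemma cascade_nil (w : List (Letter S T)) : cascade e f [] w = w := rfl
@[simp] lemma cascade_cons (g : S ⊕ T) (m : List (S ⊕ T)) (w : List (Letter S T)) :
    cascade e f (g :: m) w = cascade e f m (mact e f g w) := rfl

def stepOut : List (S ⊕ T) → Letter S T → Letter S T
  | [], ℓ => ℓ
  | g :: m, ℓ => stepOut m (ot g ℓ)

def stepRes : List (S ⊕ T) → Letter S T → List (S ⊕ T)
  | [], _ => []
  | g :: m, ℓ => nx e f g ℓ :: stepRes m (ot g ℓ)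

@[simp] lemma stepOut_nil (ℓ : Letter S T) : stepOut ([] : List (S ⊕ T)) ℓ = ℓ := rfl
@[simp] lemma stepOut_cons (g : S ⊕ T) (m : List (S ⊕ T)) (ℓ : Letter S T) :
    stepOut (g :: m) ℓ = stepOut m (ot g ℓ) := rfl
@[simp] lemma stepRes_nil (ℓ : Letter S T) : stepRes e f ([] : List (S ⊕ T)) ℓ = [] := rfl
@[simp] lemma stepRes_cons (g : S ⊕ T) (m : List (S ⊕ T)) (ℓ : Letter S T) :
    stepRes e f (g :: m) ℓ = nx e f g ℓ :: stepRes e f m (ot g ℓ) := rfl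

lemma cascade_step : ∀ (r : List (S ⊕ T)) (ℓ : Letter S T) (w : List (Letter S T)),
    cascade e f r (ℓ :: w) = stepOut r ℓ :: cascade e f (stepRes e f r ℓ) w := by
  intro r
  induction r with
  | nil => intro ℓ w; rfl
  | cons g m ih => intro ℓ w; simp [ih]

lemma cascade_nilw : ∀ (r : List (S ⊕ T)), cascade e f r [] = [] := by
  intro r
  induction r with
  | nil => rfl
  | cons g m ih => simp [ih]

/-- blocked letters pass through everything -/
lemma ot_blockedP (g : S ⊕ T) (a : Option S) :
    ot g (.inl (a, .blocked)) = (.inl (a, .blocked) : Letter S T) := by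
  rcases g with s | t <;> rfl

lemma nx_blockedP (g : S ⊕ T) (a : Option S) :
    nx e f g (.inl (a, .blocked)) = g := by
  rcases g with s | t <;> rfl

lemma ot_blockedQ (g : S ⊕ T) (b : Option T) :
    ot g (.inr (b, .blocked)) = (.inr (b, .blocked) : Letter S T) := by
  rcases g with s | t <;> rfl

lemma nx_blockedQ (g : S ⊕ T) (b : Option T) :
    nx e f g (.inr (b, .blocked)) = g := by
  rcases g with s | t <;> rfl

lemma stepOut_blockedP (m : List (S ⊕ T)) (a : Option S) :
    stepOut m (.inl (a, .blocked)) = (.inl (a, .blocked) : Letter S T) := by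
  induction m with
  | nil => rfl
  | cons g m ih => simp [ot_blockedP, ih]

lemma stepRes_blockedP (m : List (S ⊕ T)) (a : Option S) :
    stepRes e f m (.inl (a, .blocked)) = m := by
  induction m with
  | nil => rfl
  | cons g m ih => simp [ot_blockedP, nx_blockedP, ih]

lemma stepOut_blockedQ (m : List (S ⊕ T)) (b : Option T) :
    stepOut m (.inr (b, .blocked)) = (.inr (b, .blocked) : Letter S T) := by
  induction m with
  | nil => rfl
  | cons g m ih => simp [ot_blockedQ, ih]

lemma stepRes_blockedQ (m : List (S ⊕ T)) (b : Option T) :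
    stepRes e f m (.inr (b, .blocked)) = m := by
  induction m with
  | nil => rfl
  | cons g m ih => simp [ot_blockedQ, nx_blockedQ, ih]

/-- probes -/
def Pr : Letter S T := .inl (none, .raw)
def Qr : Letter S T := .inr (none, .raw)

/-- merging lemma -/
lemma cascade_mergeS (x y : S) (m : List (S ⊕ T)) (he : e * e = e) (hf : f * f = f)
    (w : List (Letter S T)) :
    cascade e f (.inl x :: .inl y :: m) w = cascade e f (.inl (y * x) :: m) w := by
  simp only [cascade_cons]
  rw [(rel_act e f he hf w).1 y x]

lemma cascade_mergeT (x y : T) (m : List (S ⊕ T)) (he : e * e = e) (hf : f * f = f)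
    (w : List (Letter S T)) :
    cascade e f (.inr x :: .inr y :: m) w = cascade e f (.inr (y * x) :: m) w := by
  simp only [cascade_cons]
  rw [(rel_act e f he hf w).2 y x]

/-- alternation -/
def Alt (r : List (S ⊕ T)) : Prop := List.Chain' (fun a b => a.isLeft ≠ b.isLeft) r

section ClosedForms

@[simp] lemma SOPA (s : S) : stepOut [(.inl s : S ⊕ T)] Pr = .inl (some s, .fresh) := rfl
@[simp] lemma SRPA (s : S) : stepRes e f [(.inl s : S ⊕ T)] Pr = [.inr f] := rfl
@[simp] lemma SOQA (s : S) : stepOut [(.inl s : S ⊕ T)] Qr = Qr := rfl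
@[simp] lemma SRQA (s : S) : stepRes e f [(.inl s : S ⊕ T)] Qr = [.inl s] := rfl
@[simp] lemma SOPB (t : T) : stepOut [(.inr t : S ⊕ T)] Pr = Pr := rfl
@[simp] lemma SRPB (t : T) : stepRes e f [(.inr t : S ⊕ T)] Pr = [.inr t] := rfl
@[simp] lemma SOQB (t : T) : stepOut [(.inr t : S ⊕ T)] Qr = .inr (some t, .fresh) := rfl
@[simp] lemma SRQB (t : T) : stepRes e f [(.inr t : S ⊕ T)] Qr = [.inl e] := rfl

lemma SOPC (s : S) (t : T) (m : List (S ⊕ T)) :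
    stepOut (.inl s :: .inr t :: m) Pr = .inl (some s, .blocked) := by
  simp [Pr, ot, mo, stepOut_blockedP]

lemma SRPC (s : S) (t : T) (m : List (S ⊕ T)) :
    stepRes e f (.inl s :: .inr t :: m) Pr = .inr f :: .inr t :: m := by
  simp [Pr, ot, nx, mo, stepRes_blockedP]

lemma SOQC_nil (s : S) (t : T) :
    stepOut [(.inl s : S ⊕ T), .inr t] Qr = .inr (some t, .fresh) := rfl

lemma SRQC_nil (s : S) (t : T) :
    stepRes e f [(.inl s : S ⊕ T), .inr t] Qr = [.inl s, .inl e] := rfl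

lemma SOQC_cons (s s₂ : S) (t : T) (m : List (S ⊕ T)) :
    stepOut (.inl s :: .inr t :: .inl s₂ :: m) Qr = .inr (some t, .blocked) := by
  simp [Qr, ot, mo, stepOut_blockedQ]

lemma SRQC_cons (s s₂ : S) (t : T) (m : List (S ⊕ T)) :
    stepRes e f (.inl s :: .inr t :: .inl s₂ :: m) Qr = .inl s :: .inl e :: .inl s₂ :: m := by
  simp [Qr, ot, nx, mo, stepRes_blockedQ]

lemma SOQD (s : S) (t : T) (m : List (S ⊕ T)) :
    stepOut (.inr t :: .inl s :: m) Qr = .inr (some t, .blocked) := by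
  simp [Qr, ot, mo, stepOut_blockedQ]

lemma SRQD (s : S) (t : T) (m : List (S ⊕ T)) :
    stepRes e f (.inr t :: .inl s :: m) Qr = .inl e :: .inl s :: m := by
  simp [Qr, ot, nx, mo, stepRes_blockedQ]

lemma SOPD_nil (s : S) (t : T) :
    stepOut [(.inr t : S ⊕ T), .inl s] Pr = .inl (some s, .fresh) := rfl

lemma SRPD_nil (s : S) (t : T) :
    stepRes e f [(.inr t : S ⊕ T), .inl s] Pr = [.inr t, .inr f] := rfl

lemma SOPD_cons (s : S) (t t₂ : T) (m : List (S ⊕ T)) :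
    stepOut (.inr t :: .inl s :: .inr t₂ :: m) Pr = .inl (some s, .blocked) := by
  simp [Pr, ot, mo, stepOut_blockedP]

lemma SRPD_cons (s : S) (t t₂ : T) (m : List (S ⊕ T)) :
    stepRes e f (.inr t :: .inl s :: .inr t₂ :: m) Pr = .inr t :: .inr f :: .inr t₂ :: m := by
  simp [Pr, ot, nx, mo, stepRes_blockedP]

end ClosedForms

lemma alt_replace_head {a a' : S ⊕ T} {l : List (S ⊕ T)} (h : Alt (a :: l))
    (hh : a'.isLeft = a.isLeft) : Alt (a' :: l) := by
  cases l with
  | nil => exact List.isChain_singleton _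
  | cons b l =>
    rcases List.isChain_cons_cons.mp h with ⟨h1, h2⟩
    exact List.isChain_cons_cons.mpr ⟨by rw [hh]; exact h1, h2⟩

lemma alt_tail {a : S ⊕ T} {l : List (S ⊕ T)} (h : Alt (a :: l)) : Alt l := h.tail

attribute [simp] SOPC SRPC SOQC_cons SRQC_cons SOQD SRQD SOPD_cons SRPD_cons

theorem core (he : e * e = e) (hf : f * f = f) :
    ∀ (n : ℕ) (r r' : List (S ⊕ T)), Alt r → Alt r' → r ≠ [] → r' ≠ [] →
      r.length + r'.length ≤ n → (∀ w, cascade e f r w = cascade e f r' w) → r = r' := by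
  intro n
  induction n using Nat.strong_induction_on with
  | _ n IH =>
  intro r r' hA hA' hne hne' hlen hcas
  have hP : stepOut r (Pr : Letter S T) = stepOut r' Pr := by
    have h := hcas [Pr]
    rw [cascade_step, cascade_step, cascade_nilw, cascade_nilw] at h
    exact List.head_eq_of_cons_eq h
  have hQ : stepOut r (Qr : Letter S T) = stepOut r' Qr := by
    have h := hcas [Qr]
    rw [cascade_step, cascade_step, cascade_nilw, cascade_nilw] at h
    exact List.head_eq_of_cons_eq h
  have hPw : ∀ w, cascade e f (stepRes e f r Pr) w = cascade e f (stepRes e f r' Pr) w := by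
    intro w
    have h := hcas (Pr :: w)
    rw [cascade_step, cascade_step] at h
    exact List.tail_eq_of_cons_eq h
  have hQw : ∀ w, cascade e f (stepRes e f r Qr) w = cascade e f (stepRes e f r' Qr) w := by
    intro w
    have h := hcas (Qr :: w)
    rw [cascade_step, cascade_step] at h
    exact List.tail_eq_of_cons_eq h
  clear hcas
  -- destructure r into one of 6 shapes
  rcases r with _ | ⟨g1, r1⟩
  · exact absurd rfl hne
  rcases r' with _ | ⟨g1', r1'⟩
  · exact absurd rfl hne'
  clear hne hne'
  rcases r1 with _ | ⟨g2, m⟩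
  case nil =>
    -- r = [g1]
    rcases r1' with _ | ⟨g2', m'⟩
    case nil =>
      -- both singletons
      rcases g1 with s | t <;> rcases g1' with s' | t'
      · simp only [SOPA] at hP; simp at hP; rw [hP]
      · simp only [SOQA, SOQB] at hQ; simp [Qr] at hQ
      · simp only [SOQA, SOQB] at hQ; simp [Qr] at hQ
      · simp only [SOQB] at hQ; simp at hQ; rw [hQ]
    case cons =>
      obtain ⟨hrel', hA2'⟩ := List.isChain_cons_cons.mp hA'
      rcases g1 with s | t <;> rcases g1' with s' | t' <;> rcases g2' with s₂' | t₂' <;>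
          simp only [Sum.isLeft] at hrel' <;> try exact absurd rfl hrel'
      · -- r = [inl s], r' = inl s' :: inr t₂' :: m'
        simp only [SOPA, SOPC] at hP; simp at hP
      · -- r = [inl s], r' = inr t' :: inl s₂' :: m'
        simp only [SOQA, SOQD] at hQ; simp [Qr] at hQ
      · -- r = [inr t], r' = inl s' :: inr t₂' :: m'
        simp only [SOPB, SOPC] at hP; simp [Pr] at hP
      · -- r = [inr t], r' = inr t' :: inl s₂' :: m'
        simp only [SOQB, SOQD] at hQ; simp at hQ
  case cons =>
    obtain ⟨hrel, hA2⟩ := List.isChain_cons_cons.mp hA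
    rcases r1' with _ | ⟨g2', m'⟩
    case nil =>
      rcases g1 with s | t <;> rcases g1' with s' | t' <;> rcases g2 with s₂ | t₂ <;>
          simp only [Sum.isLeft] at hrel <;> try exact absurd rfl hrel
      · simp only [SOPA, SOPC] at hP; simp at hP
      · simp only [SOPB, SOPC] at hP; simp [Pr] at hP
      · simp only [SOQA, SOQD] at hQ; simp [Qr] at hQ
      · simp only [SOQB, SOQD] at hQ; simp at hQ
    case cons =>
      obtain ⟨hrel', hA2'⟩ := List.isChain_cons_cons.mp hA'
      rcases g1 with s | t <;> rcases g1' with s' | t' <;> rcases g2 with s₂ | t₂ <;>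
          rcases g2' with s₂' | t₂' <;> simp only [Sum.isLeft] at hrel hrel' <;>
          first
            | exact absurd rfl hrel
            | exact absurd rfl hrel'
            | skip
      -- four branches: (C,C) (C,D) (D,C) (D,D) with r = g1 :: g2 :: m etc.
      · -- r = inl s :: inr t₂ :: m ; r' = inl s' :: inr t₂' :: m'
        simp only [SOPC] at hP; simp at hP
        subst hP
        rcases m with _ | ⟨g3, mt⟩ <;> rcases m' with _ | ⟨g3', mt'⟩
        · -- both [inl s, inr t]
          simp only [SOQC_nil] at hQ; simp at hQ; rw [hQ]
        · -- [s,t] vs long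
          obtain ⟨hrel3', hA3'⟩ := List.isChain_cons_cons.mp hA2'
          rcases g3' with s₃' | t₃'
          · simp only [SOQC_nil, SOQC_cons] at hQ; simp at hQ
          · simp only [Sum.isLeft] at hrel3'; exact absurd rfl hrel3'
        · obtain ⟨hrel3, hA3⟩ := List.isChain_cons_cons.mp hA2
          rcases g3 with s₃ | t₃
          · simp only [SOQC_nil, SOQC_cons] at hQ; simp at hQ
          · simp only [Sum.isLeft] at hrel3; exact absurd rfl hrel3
        · -- both long: IH on P-residuals
          obtain ⟨hrel3, hA3⟩ := List.isChain_cons_cons.mp hA2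
          obtain ⟨hrel3', hA3'⟩ := List.isChain_cons_cons.mp hA2'
          rcases g3 with s₃ | t₃
          case inr => simp only [Sum.isLeft] at hrel3; exact absurd rfl hrel3
          rcases g3' with s₃' | t₃'
          case inr => simp only [Sum.isLeft] at hrel3'; exact absurd rfl hrel3'
          simp only [SOQC_cons] at hQ; simp at hQ
          subst hQ
          have hres : ∀ w, cascade e f (.inr (t₂ * f) :: .inl s₃ :: mt) w
              = cascade e f (.inr (t₂ * f) :: .inl s₃' :: mt') w := by
            intro w
            have h := hPw w
            rw [SRPC, SRPC, cascade_mergeT e f f t₂ _ he hf,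
              cascade_mergeT e f f t₂ _ he hf] at h
            exact h
          have hAL : Alt ((.inr (t₂ * f) : S ⊕ T) :: .inl s₃ :: mt) :=
            alt_replace_head hA2 rfl
          have hAL' : Alt ((.inr (t₂ * f) : S ⊕ T) :: .inl s₃' :: mt') :=
            alt_replace_head hA2' rfl
          have heq := IH ((.inr (t₂ * f) :: .inl s₃ :: mt).length
              + ((.inr (t₂ * f) : S ⊕ T) :: .inl s₃' :: mt').length)
            (by simp at hlen ⊢; omega)
            _ _ hAL hAL' (by simp) (by simp) le_rfl hres
          injection heq with _ heq2
          rw [heq2]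
      · -- r = inl s :: inr t₂ :: m ; r' = inr t' :: inl s₂' :: m' (the hard E/F case)
        rcases m with _ | ⟨g3, mt⟩
        · -- r = [inl s, inr t₂] : hQ fresh vs blocked
          simp only [SOQC_nil, SOQD] at hQ; simp at hQ
        obtain ⟨hrel3, hA3⟩ := List.isChain_cons_cons.mp hA2
        rcases g3 with s₃ | t₃
        case inr => simp only [Sum.isLeft] at hrel3; exact absurd rfl hrel3
        rcases m' with _ | ⟨g3', mt'⟩
        · -- r' = [inr t', inl s₂'] : hP blocked vs fresh
          simp only [SOPC, SOPD_nil] at hP; simp at hP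
        obtain ⟨hrel3', hA3'⟩ := List.isChain_cons_cons.mp hA2'
        rcases g3' with s₃' | t₃'
        case inl => simp only [Sum.isLeft] at hrel3'; exact absurd rfl hrel3'
        -- r = inl s :: inr t₂ :: inl s₃ :: mt ; r' = inr t' :: inl s₂' :: inr t₃' :: mt'
        exfalso
        simp only [SOPC, SOPD_cons] at hP; simp at hP
        simp only [SOQC_cons, SOQD] at hQ; simp at hQ
        -- P residuals
        have hres1 : ∀ w, cascade e f (.inr (t₂ * f) :: .inl s₃ :: mt) w
            = cascade e f (.inr (t₃' * (f * t')) :: mt') w := by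
          intro w
          have h := hPw w
          rw [SRPC, SRPD_cons, cascade_mergeT e f f t₂ _ he hf,
            cascade_mergeT e f t' f _ he hf, cascade_mergeT e f (f * t') t₃' _ he hf] at h
          exact h
        have hAL1 : Alt ((.inr (t₂ * f) : S ⊕ T) :: .inl s₃ :: mt) :=
          alt_replace_head hA2 rfl
        have hAL1' : Alt ((.inr (t₃' * (f * t')) : S ⊕ T) :: mt') :=
          alt_replace_head hA3' rfl
        have heq1 := IH ((.inr (t₂ * f) :: .inl s₃ :: mt).length
            + ((.inr (t₃' * (f * t')) : S ⊕ T) :: mt').length)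
          (by simp at hlen ⊢; omega)
          _ _ hAL1 hAL1' (by simp) (by simp) le_rfl hres1
        have hlen1 := congrArg List.length heq1
        -- Q residuals
        have hres2 : ∀ w, cascade e f (.inl (s₃ * (e * s)) :: mt) w
            = cascade e f (.inl (s₂' * e) :: .inr t₃' :: mt') w := by
          intro w
          have h := hQw w
          rw [SRQC_cons, SRQD, cascade_mergeS e f s e _ he hf,
            cascade_mergeS e f (e * s) s₃ _ he hf,
            cascade_mergeS e f e s₂' _ he hf] at h
          exact h
        have hAL2 : Alt ((.inl (s₃ * (e * s)) : S ⊕ T) :: mt) :=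
          alt_replace_head hA3 rfl
        have hAL2' : Alt ((.inl (s₂' * e) : S ⊕ T) :: .inr t₃' :: mt') :=
          alt_replace_head hA2' rfl
        have heq2 := IH ((.inl (s₃ * (e * s)) :: mt).length
            + ((.inl (s₂' * e) : S ⊕ T) :: .inr t₃' :: mt').length)
          (by simp at hlen ⊢; omega)
          _ _ hAL2 hAL2' (by simp) (by simp) le_rfl hres2
        have hlen2 := congrArg List.length heq2
        simp at hlen1 hlen2
        omega
      · -- r = inr t :: inl s₂ :: m ; r' = inl s' :: inr t₂' :: m' (mirror of previous)
        rcases m' with _ | ⟨g3', mt'⟩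
        · simp only [SOQC_nil, SOQD] at hQ; simp at hQ
        obtain ⟨hrel3', hA3'⟩ := List.isChain_cons_cons.mp hA2'
        rcases g3' with s₃' | t₃'
        case inr => simp only [Sum.isLeft] at hrel3'; exact absurd rfl hrel3'
        rcases m with _ | ⟨g3, mt⟩
        · simp only [SOPC, SOPD_nil] at hP; simp at hP
        obtain ⟨hrel3, hA3⟩ := List.isChain_cons_cons.mp hA2
        rcases g3 with s₃ | t₃
        case inl => simp only [Sum.isLeft] at hrel3; exact absurd rfl hrel3
        exfalso
        simp only [SOPC, SOPD_cons] at hP; simp at hP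
        simp only [SOQC_cons, SOQD] at hQ; simp at hQ
        have hres1 : ∀ w, cascade e f (.inr (t₂' * f) :: .inl s₃' :: mt') w
            = cascade e f (.inr (t₃ * (f * t)) :: mt) w := by
          intro w
          have h := (hPw w).symm
          rw [SRPC, SRPD_cons, cascade_mergeT e f f t₂' _ he hf,
            cascade_mergeT e f t f _ he hf, cascade_mergeT e f (f * t) t₃ _ he hf] at h
          exact h
        have hAL1 : Alt ((.inr (t₂' * f) : S ⊕ T) :: .inl s₃' :: mt') :=
          alt_replace_head hA2' rfl
        have hAL1' : Alt ((.inr (t₃ * (f * t)) : S ⊕ T) :: mt) :=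
          alt_replace_head hA3 rfl
        have heq1 := IH ((.inr (t₂' * f) :: .inl s₃' :: mt').length
            + ((.inr (t₃ * (f * t)) : S ⊕ T) :: mt).length)
          (by simp at hlen ⊢; omega)
          _ _ hAL1 hAL1' (by simp) (by simp) le_rfl hres1
        have hlen1 := congrArg List.length heq1
        have hres2 : ∀ w, cascade e f (.inl (s₃' * (e * s')) :: mt') w
            = cascade e f (.inl (s₂ * e) :: .inr t₃ :: mt) w := by
          intro w
          have h := (hQw w).symm
          rw [SRQC_cons, SRQD, cascade_mergeS e f s' e _ he hf,
            cascade_mergeS e f (e * s') s₃' _ he hf,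
            cascade_mergeS e f e s₂ _ he hf] at h
          exact h
        have hAL2 : Alt ((.inl (s₃' * (e * s')) : S ⊕ T) :: mt') :=
          alt_replace_head hA3' rfl
        have hAL2' : Alt ((.inl (s₂ * e) : S ⊕ T) :: .inr t₃ :: mt) :=
          alt_replace_head hA2 rfl
        have heq2 := IH ((.inl (s₃' * (e * s')) :: mt').length
            + ((.inl (s₂ * e) : S ⊕ T) :: .inr t₃ :: mt).length)
          (by simp at hlen ⊢; omega)
          _ _ hAL2 hAL2' (by simp) (by simp) le_rfl hres2
        have hlen2 := congrArg List.length heq2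
        simp at hlen1 hlen2
        omega
      · -- r = inr t :: inl s₂ :: m ; r' = inr t' :: inl s₂' :: m'
        simp only [SOQD] at hQ; simp at hQ
        subst hQ
        rcases m with _ | ⟨g3, mt⟩ <;> rcases m' with _ | ⟨g3', mt'⟩
        · simp only [SOPD_nil] at hP; simp at hP; rw [hP]
        · obtain ⟨hrel3', hA3'⟩ := List.isChain_cons_cons.mp hA2'
          rcases g3' with s₃' | t₃'
          · simp only [Sum.isLeft] at hrel3'; exact absurd rfl hrel3'
          · simp only [SOPD_nil, SOPD_cons] at hP; simp at hP
        · obtain ⟨hrel3, hA3⟩ := List.isChain_cons_cons.mp hA2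
          rcases g3 with s₃ | t₃
          · simp only [Sum.isLeft] at hrel3; exact absurd rfl hrel3
          · simp only [SOPD_nil, SOPD_cons] at hP; simp at hP
        · obtain ⟨hrel3, hA3⟩ := List.isChain_cons_cons.mp hA2
          obtain ⟨hrel3', hA3'⟩ := List.isChain_cons_cons.mp hA2'
          rcases g3 with s₃ | t₃
          case inl => simp only [Sum.isLeft] at hrel3; exact absurd rfl hrel3
          rcases g3' with s₃' | t₃'
          case inl => simp only [Sum.isLeft] at hrel3'; exact absurd rfl hrel3'
          simp only [SOPD_cons] at hP; simp at hP
          subst hP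
          have hres : ∀ w, cascade e f (.inl (s₂ * e) :: .inr t₃ :: mt) w
              = cascade e f (.inl (s₂ * e) :: .inr t₃' :: mt') w := by
            intro w
            have h := hQw w
            rw [SRQD, SRQD, cascade_mergeS e f e s₂ _ he hf,
              cascade_mergeS e f e s₂ _ he hf] at h
            exact h
          have hAL : Alt ((.inl (s₂ * e) : S ⊕ T) :: .inr t₃ :: mt) :=
            alt_replace_head hA2 rfl
          have hAL' : Alt ((.inl (s₂ * e) : S ⊕ T) :: .inr t₃' :: mt') :=
            alt_replace_head hA2' rfl
          have heq := IH ((.inl (s₂ * e) :: .inr t₃ :: mt).length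
              + ((.inl (s₂ * e) : S ⊕ T) :: .inr t₃' :: mt').length)
            (by simp at hlen ⊢; omega)
            _ _ hAL hAL' (by simp) (by simp) le_rfl hres
          injection heq with _ heq2
          rw [heq2]

/-! ## Normal forms for the free product -/

def appendR : List (S ⊕ T) → S ⊕ T → List (S ⊕ T)
  | [], g => [g]
  | .inl a :: m, .inl b => .inl (a * b) :: m
  | .inl a :: m, .inr b => .inr b :: .inl a :: m
  | .inr a :: m, .inl b => .inl b :: .inr a :: m
  | .inr a :: m, .inr b => .inr (a * b) :: m

lemma appendR_ne_nil (l : List (S ⊕ T)) (g : S ⊕ T) : appendR l g ≠ [] := by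
  rcases l with _ | ⟨a | a, m⟩ <;> rcases g with b | b <;> simp [appendR]

lemma alt_appendR (l : List (S ⊕ T)) (g : S ⊕ T) (h : Alt l) : Alt (appendR l g) := by
  rcases l with _ | ⟨a | a, m⟩ <;> rcases g with b | b
  · exact List.isChain_singleton _
  · exact List.isChain_singleton _
  · exact alt_replace_head h rfl
  · exact List.isChain_cons_cons.mpr ⟨by simp, h⟩
  · exact List.isChain_cons_cons.mpr ⟨by simp, h⟩
  · exact alt_replace_head h rfl

def NFrev (u : FreeSemigroup (S ⊕ T)) : List (S ⊕ T) :=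
  (u.head :: u.tail).foldl appendR []

lemma foldl_appendR_props : ∀ (L l : List (S ⊕ T)), l ≠ [] → Alt l →
    (L.foldl appendR l ≠ [] ∧ Alt (L.foldl appendR l)) := by
  intro L
  induction L with
  | nil => exact fun l h1 h2 => ⟨h1, h2⟩
  | cons g L ih =>
    intro l h1 h2
    exact ih (appendR l g) (appendR_ne_nil l g) (alt_appendR l g h2)

lemma NFrev_ne_nil (u : FreeSemigroup (S ⊕ T)) : NFrev u ≠ [] := by
  have := foldl_appendR_props u.tail [u.head] (by simp) (List.isChain_singleton _)
  simpa [NFrev, appendR] using this.1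

lemma NFrev_alt (u : FreeSemigroup (S ⊕ T)) : Alt (NFrev u) := by
  have := foldl_appendR_props u.tail [u.head] (by simp) (List.isChain_singleton _)
  simpa [NFrev, appendR] using this.2

/-- embed a reversed word back into the free semigroup -/
def eR : S ⊕ T → List (S ⊕ T) → FreeSemigroup (S ⊕ T)
  | g, [] => .of g
  | g, h :: m => eR h m * .of g

variable (S T) in
abbrev cG : Con (FreeSemigroup (S ⊕ T)) := conGen (freeProdRel S T)

variable [Nonempty S]

noncomputable def eRL : List (S ⊕ T) → FreeSemigroup (S ⊕ T)
  | [] => .of (.inl (Classical.arbitrary S))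
  | h :: m => eR h m

@[simp] lemma eRL_cons (h : S ⊕ T) (m : List (S ⊕ T)) : eRL (h :: m) = eR h m := rfl

lemma cG_append (h : S ⊕ T) (m : List (S ⊕ T)) (g : S ⊕ T) :
    cG S T (eRL (appendR (h :: m) g)) (eRL (h :: m) * .of g) := by
  rcases h with a | a <;> rcases g with b | b
  · show cG S T (eRL (.inl (a * b) :: m)) _
    cases m with
    | nil =>
      exact Con.symm _ (ConGen.Rel.of _ _ (Or.inl ⟨a, b, rfl, rfl⟩))
    | cons h₂ m₂ =>
      have h1 : cG S T (FreeSemigroup.of (Sum.inl (a * b) : S ⊕ T))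
          (.of (.inl a) * .of (.inl b)) :=
        Con.symm _ (ConGen.Rel.of _ _ (Or.inl ⟨a, b, rfl, rfl⟩))
      have h2 := (cG S T).mul (Con.refl _ (eR h₂ m₂)) h1
      rw [← mul_assoc] at h2
      exact h2
  · exact Con.refl _ _
  · exact Con.refl _ _
  · show cG S T (eRL (.inr (a * b) :: m)) _
    cases m with
    | nil =>
      exact Con.symm _ (ConGen.Rel.of _ _ (Or.inr ⟨a, b, rfl, rfl⟩))
    | cons h₂ m₂ =>
      have h1 : cG S T (FreeSemigroup.of (Sum.inr (a * b) : S ⊕ T))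
          (.of (.inr a) * .of (.inr b)) :=
        Con.symm _ (ConGen.Rel.of _ _ (Or.inr ⟨a, b, rfl, rfl⟩))
      have h2 := (cG S T).mul (Con.refl _ (eR h₂ m₂)) h1
      rw [← mul_assoc] at h2
      exact h2

def mulL (x : FreeSemigroup (S ⊕ T)) (L : List (S ⊕ T)) : FreeSemigroup (S ⊕ T) :=
  L.foldl (fun y g => y * .of g) x

@[simp] lemma mulL_nil (x : FreeSemigroup (S ⊕ T)) : mulL x [] = x := rfl
@[simp] lemma mulL_cons (x : FreeSemigroup (S ⊕ T)) (g : S ⊕ T) (L : List (S ⊕ T)) :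
    mulL x (g :: L) = mulL (x * .of g) L := rfl

lemma cG_mulL {x y : FreeSemigroup (S ⊕ T)} (h : cG S T x y) :
    ∀ L, cG S T (mulL x L) (mulL y L) := by
  intro L
  induction L generalizing x y with
  | nil => exact h
  | cons g L ih =>
    simp only [mulL_cons]
    exact ih ((cG S T).mul h (Con.refl _ (FreeSemigroup.of g)))

lemma main_fold : ∀ (L l : List (S ⊕ T)), l ≠ [] →
    cG S T (mulL (eRL l) L) (eRL (L.foldl appendR l)) := by
  intro L
  induction L with
  | nil => intro l _; exact Con.refl _ _
  | cons g L ih =>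
    intro l hl
    obtain ⟨h, m, rfl⟩ : ∃ h m, l = h :: m := by
      cases l with
      | nil => exact absurd rfl hl
      | cons h m => exact ⟨h, m, rfl⟩
    have h1 : cG S T (mulL (eRL (h :: m) * .of g) L) (mulL (eRL (appendR (h :: m) g)) L) :=
      cG_mulL (Con.symm _ (cG_append h m g)) L
    have h2 := ih (appendR (h :: m) g) (appendR_ne_nil _ _)
    exact Con.trans _ h1 h2

lemma mk_eq_mulL : ∀ (L : List (S ⊕ T)) (a : S ⊕ T),
    (⟨a, L⟩ : FreeSemigroup (S ⊕ T)) = mulL (.of a) L := by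
  intro L
  induction L using List.reverseRecOn with
  | nil => intro a; rfl
  | append_singleton L g ih =>
    intro a
    have h1 : (⟨a, L ++ [g]⟩ : FreeSemigroup (S ⊕ T)) = ⟨a, L⟩ * .of g := rfl
    rw [h1, ih a]
    simp [mulL, List.foldl_append]

lemma NF_equiv (u : FreeSemigroup (S ⊕ T)) : cG S T u (eRL (NFrev u)) := by
  have h := main_fold u.tail [u.head] (by simp)
  have h2 : mulL (eRL [u.head]) u.tail = u := by
    rw [eRL_cons]
    show mulL (.of u.head) u.tail = u
    rw [← mk_eq_mulL]
  rw [h2] at h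
  have h3 : NFrev u = u.tail.foldl appendR [u.head] := by
    simp [NFrev, appendR]
  rw [h3]
  exact h

/-! ## The automaton and the isomorphism -/

variable [Nonempty T]

def Aut [Fintype S] [Fintype T] : MealyAutomaton where
  Q := S ⊕ T
  B := Letter S T
  fintypeQ := inferInstance
  nonemptyQ := ⟨.inl (Classical.arbitrary S)⟩
  fintypeB := inferInstance
  nonemptyB := ⟨.inl (none, .raw)⟩
  next := nx e f
  out := ot

lemma aut_act [Fintype S] [Fintype T] :
    ∀ (w : List (Letter S T)) (q : S ⊕ T), (Aut e f).act q w = mact e f q w := by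
  intro w
  induction w with
  | nil => intro q; rfl
  | cons ℓ w ih => intro q; show _ :: _ = _ :: _; exact congrArg (List.cons _) (ih _)

/-- the generator action as an element of `Function.End` -/
def g0 : S ⊕ T → Function.End (List (Letter S T)) := fun q => mact e f q

def Phi0 : FreeSemigroup (S ⊕ T) →ₙ* Function.End (List (Letter S T)) :=
  FreeSemigroup.lift (g0 e f)

lemma Phi0_eR : ∀ (m : List (S ⊕ T)) (h : S ⊕ T) (w : List (Letter S T)),
    Phi0 e f (eR h m) w = cascade e f (h :: m) w := by
  intro m
  induction m with
  | nil =>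
    intro h w
    show Phi0 e f (.of h) w = mact e f h w
    rw [Phi0, FreeSemigroup.lift_of]
    rfl
  | cons h₂ m₂ ih =>
    intro h w
    show Phi0 e f (eR h₂ m₂ * .of h) w = _
    have h1 : Phi0 e f (eR h₂ m₂ * .of h) w
        = Phi0 e f (eR h₂ m₂) (Phi0 e f (.of h) w) := by
      rw [map_mul]; rfl
    rw [h1, Phi0, FreeSemigroup.lift_of]
    show Phi0 e f (eR h₂ m₂) (mact e f h w) = _
    rw [ih h₂ (mact e f h w)]
    rfl

/-- the kernel congruence of `Phi0` -/
def kerC : Con (FreeSemigroup (S ⊕ T)) where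
  r x y := Phi0 e f x = Phi0 e f y
  iseqv := ⟨fun _ => rfl, Eq.symm, Eq.trans⟩
  mul' h1 h2 := by show Phi0 e f _ = _; rw [map_mul, map_mul, h1, h2]

lemma cG_le_ker (he : e * e = e) (hf : f * f = f) : cG S T ≤ kerC e f := by
  apply Con.conGen_le.mpr
  rintro x y (⟨s, s', rfl, rfl⟩ | ⟨t, t', rfl, rfl⟩)
  · show Phi0 e f _ = Phi0 e f _
    funext w
    rw [map_mul]
    show Phi0 e f _ (Phi0 e f _ w) = _
    rw [Phi0, FreeSemigroup.lift_of, FreeSemigroup.lift_of, FreeSemigroup.lift_of]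
    exact (rel_act e f he hf w).1 s s'
  · show Phi0 e f _ = Phi0 e f _
    funext w
    rw [map_mul]
    show Phi0 e f _ (Phi0 e f _ w) = _
    rw [Phi0, FreeSemigroup.lift_of, FreeSemigroup.lift_of, FreeSemigroup.lift_of]
    exact (rel_act e f he hf w).2 t t'

variable (he : e * e = e) (hf : f * f = f)

/-- the induced homomorphism on the free product -/
noncomputable def Phi : SemigroupFreeProduct S T →ₙ* Function.End (List (Letter S T)) where
  toFun q := Con.liftOn q (Phi0 e f) (fun _ _ h => cG_le_ker e f he hf h)
  map_mul' x y := Con.induction_on₂ x y fun a b => by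
    show Con.liftOn ((a * b : FreeSemigroup (S ⊕ T)) : (cG S T).Quotient) _ _ = _
    rw [Con.coe_mul]
    show Phi0 e f (a * b) = Phi0 e f a * Phi0 e f b
    exact map_mul _ _ _

@[simp] lemma Phi_coe (u : FreeSemigroup (S ⊕ T)) :
    Phi e f he hf (u : (cG S T).Quotient) = Phi0 e f u := rfl

lemma Phi_injective : Function.Injective (Phi e f he hf) := by
  intro x y h
  induction x using Con.induction_on with
  | _ u =>
  induction y using Con.induction_on with
  | _ v =>
  rw [Phi_coe, Phi_coe] at h
  have hu := cG_le_ker e f he hf (NF_equiv u)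
  have hv := cG_le_ker e f he hf (NF_equiv v)
  have h2 : Phi0 e f (eRL (NFrev u)) = Phi0 e f (eRL (NFrev v)) := by
    rw [← hu, ← hv]; exact h
  obtain ⟨h₁, m₁, hm₁⟩ : ∃ h₁ m₁, NFrev u = h₁ :: m₁ := by
    rcases hnu : NFrev u with _ | ⟨h₁, m₁⟩
    · exact absurd hnu (NFrev_ne_nil u)
    · exact ⟨h₁, m₁, rfl⟩
  obtain ⟨h₂, m₂, hm₂⟩ : ∃ h₂ m₂, NFrev v = h₂ :: m₂ := by
    rcases hnv : NFrev v with _ | ⟨h₂, m₂⟩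
    · exact absurd hnv (NFrev_ne_nil v)
    · exact ⟨h₂, m₂, rfl⟩
  have hcas : ∀ w, cascade e f (NFrev u) w = cascade e f (NFrev v) w := by
    intro w
    rw [hm₁, hm₂, ← Phi0_eR, ← Phi0_eR]
    rw [hm₁, hm₂] at h2
    rw [eRL_cons, eRL_cons] at h2
    rw [h2]
  have hNF : NFrev u = NFrev v :=
    core e f he hf ((NFrev u).length + (NFrev v).length) (NFrev u) (NFrev v)
      (NFrev_alt u) (NFrev_alt v) (NFrev_ne_nil u) (NFrev_ne_nil v) le_rfl hcas
  have e1 : (u : (cG S T).Quotient) = (eRL (NFrev u) : (cG S T).Quotient) :=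
    (Con.eq _).mpr (NF_equiv u)
  have e2 : (v : (cG S T).Quotient) = (eRL (NFrev v) : (cG S T).Quotient) :=
    (Con.eq _).mpr (NF_equiv v)
  show (u : (cG S T).Quotient) = (v : (cG S T).Quotient)
  rw [e1, e2, hNF]

lemma Phi_mem [Fintype S] [Fintype T] (q : SemigroupFreeProduct S T) :
    Phi e f he hf q ∈ automatonSemigroup (Aut e f (S := S) (T := T)) := by
  induction q using Con.induction_on with
  | _ u =>
  rw [Phi_coe]
  induction u using FreeSemigroup.recOnMul with
  | ih1 g =>
    apply Subsemigroup.subset_closure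
    refine ⟨g, ?_⟩
    funext w
    show (Aut e f).act g w = Phi0 e f (FreeSemigroup.of g) w
    rw [Phi0, FreeSemigroup.lift_of]
    exact aut_act e f w g
  | ih2 x y hx hy =>
    rw [map_mul]
    exact Subsemigroup.mul_mem _ hx hy

lemma Phi_surj [Fintype S] [Fintype T] (x : Function.End (List (Letter S T)))
    (hx : x ∈ automatonSemigroup (Aut e f (S := S) (T := T))) :
    ∃ q : SemigroupFreeProduct S T, Phi e f he hf q = x := by
  induction hx using Subsemigroup.closure_induction with
  | mem z hz =>
    obtain ⟨g, rfl⟩ := hz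
    refine ⟨((FreeSemigroup.of g : FreeSemigroup (S ⊕ T)) : (cG S T).Quotient), ?_⟩
    rw [Phi_coe, Phi0]; erw [FreeSemigroup.lift_of]
    funext w
    exact (aut_act e f w g).symm
  | mul z₁ z₂ _ _ h₁ h₂ =>
    obtain ⟨q₁, rfl⟩ := h₁
    obtain ⟨q₂, rfl⟩ := h₂
    exact ⟨q₁ * q₂, map_mul _ _ _⟩

/-- the bundled hom into the subsemigroup -/
noncomputable def PhiR [Fintype S] [Fintype T] :
    SemigroupFreeProduct S T →ₙ* (automatonSemigroup (Aut e f (S := S) (T := T))) where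
  toFun q := ⟨Phi e f he hf q, Phi_mem e f he hf q⟩
  map_mul' x y := Subtype.ext (map_mul (Phi e f he hf) x y)

lemma PhiR_bijective [Fintype S] [Fintype T] :
    Function.Bijective (PhiR e f he hf (S := S) (T := T)) := by
  constructor
  · intro x y h
    apply Phi_injective e f he hf
    exact congrArg Subtype.val h
  · rintro ⟨x, hx⟩
    obtain ⟨q, hq⟩ := Phi_surj e f he hf x hx
    exact ⟨q, Subtype.ext hq⟩

end FPC

/-- Free products of finite (nonempty) semigroups are automaton semigroups. -/
theorem freeProduct_of_finite_isAutomatonSemigroup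
    (S T : Type) [Semigroup S] [Semigroup T] [Fintype S] [Fintype T]
    [Nonempty S] [Nonempty T] :
    IsAutomatonSemigroup (SemigroupFreeProduct S T) := by
  obtain ⟨e, he⟩ := FPC.exists_idem S
  obtain ⟨f, hf⟩ := FPC.exists_idem T
  exact ⟨FPC.Aut e f, ⟨MulEquiv.ofBijective (FPC.PhiR e f he hf)
    (FPC.PhiR_bijective e f he hf)⟩⟩
end

section
/- Let 𝒜 = (Q, B, δ) be a Mealy automaton such that Σ(𝒜) has a zero element, and let q, z ∈ Q be states such that the action of z is the zero element of Σ(𝒜) and, for every b ∈ B, the state component of δ(q, b) lies in {q, z}. Then the action of q is a periodic element of Σ(𝒜): there exist positive integers m < n such that the m-fold composition of the action of q equals its n-fold composition. -/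
/-- The action of a state, as an element of the endomorphism monoid of `List B`. -/
def MealyAutomaton.actEnd (A : MealyAutomaton) (q : A.Q) : Function.End (List A.B) :=
  A.act q

lemma myActEnd_mem (A : MealyAutomaton) (q : A.Q) :
    A.actEnd q ∈ automatonSemigroup A :=
  Subsemigroup.subset_closure ⟨q, rfl⟩

lemma myActEnd_pow_mem (A : MealyAutomaton) (q : A.Q) (k : ℕ) :
    A.actEnd q ^ (k + 1) ∈ automatonSemigroup A := by
  induction k with
  | zero => simpa using myActEnd_mem A q
  | succ k ih => rw [pow_succ]; exact mul_mem ih (myActEnd_mem A q)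

lemma myActEnd_pow_apply (A : MealyAutomaton) (q : A.Q) (k : ℕ) (w : List A.B) :
    (A.actEnd q ^ (k + 1)) w = (A.act q)^[k + 1] w := by
  induction k generalizing w with
  | zero => rfl
  | succ k ih =>
    rw [pow_succ]
    show (A.actEnd q ^ (k + 1)) (A.act q w) = _
    rw [ih, ← Function.iterate_succ_apply]

open scoped Classical in
lemma myKey (A : MealyAutomaton) (q z : A.Q)
    (hq : ∀ b, A.next q b = q ∨ A.next q b = z)
    (hzf : ∀ w, A.act z (A.act q w) = A.act z w)
    (hzz : ∀ w, A.act z (A.act z w) = A.act z w)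
    (hfz : ∀ k w, (A.act q)^[k] (A.act z w) = A.act z w)
    (k : ℕ) (b : A.B) (w : List A.B) :
    (A.act q)^[k] (b :: w) =
      (A.out q)^[k] b ::
        (if ∀ i < k, A.next q ((A.out q)^[i] b) = q
         then (A.act q)^[k] w else A.act z w) := by
  induction k generalizing b w with
  | zero => simp
  | succ k ih =>
    rw [Function.iterate_succ_apply]
    have hstep : A.act q (b :: w) = A.out q b :: A.act (A.next q b) w := rfl
    rw [hstep, ih, ← Function.iterate_succ_apply (A.out q)]
    by_cases h1 : ∀ i < k, A.next q ((A.out q)^[i] (A.out q b)) = q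
    · rw [if_pos h1]
      by_cases h0 : A.next q b = q
      · rw [h0, ← Function.iterate_succ_apply, if_pos]
        intro i hi
        cases i with
        | zero => simpa using h0
        | succ i => simpa [Function.iterate_succ_apply] using h1 i (by omega)
      · rw [(hq b).resolve_left h0, hfz k w, if_neg]
        intro hc
        exact h0 (by simpa using hc 0 (by omega))
    · rw [if_neg h1]
      by_cases h0 : A.next q b = q
      · rw [h0, hzf w, if_neg]
        intro hc
        exact h1 fun i hi => by
          simpa [Function.iterate_succ_apply] using hc (i + 1) (by omega)
      · rw [(hq b).resolve_left h0, hzz w, if_neg]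
        intro hc
        exact h0 (by simpa using hc 0 (by omega))

theorem my_main
    (A : MealyAutomaton) (q z : A.Q)
    (hzero : ∀ s ∈ automatonSemigroup A,
      A.actEnd z * s = A.actEnd z ∧ s * A.actEnd z = A.actEnd z)
    (hq : ∀ b : A.B, A.next q b = q ∨ A.next q b = z) :
    ∃ m n : ℕ, 0 < m ∧ m < n ∧ A.actEnd q ^ m = A.actEnd q ^ n := by
  classical
  haveI := A.fintypeB
  have hzf : ∀ w, A.act z (A.act q w) = A.act z w := fun w =>
    congrFun (hzero _ (myActEnd_mem A q)).1 w
  have hzz : ∀ w, A.act z (A.act z w) = A.act z w := fun w =>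
    congrFun (hzero _ (myActEnd_mem A z)).1 w
  have hfz : ∀ k w, (A.act q)^[k] (A.act z w) = A.act z w := by
    intro k w
    cases k with
    | zero => rfl
    | succ k =>
      have := congrFun (hzero _ (myActEnd_pow_mem A q k)).2 w
      rw [← myActEnd_pow_apply]
      exact this
  set F : ℕ → (A.B → A.B) × (A.B → Prop) := fun k =>
    ((A.out q)^[k + 1], fun b => ∀ i < k + 1, A.next q ((A.out q)^[i] b) = q) with hF
  obtain ⟨m, n, hmn, heq⟩ := Finite.exists_ne_map_eq_of_infinite F
  wlog hlt : m < n generalizing m n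
  · exact this n m hmn.symm heq.symm (hmn.lt_or_gt.resolve_left hlt)
  refine ⟨m + 1, n + 1, by omega, by omega, ?_⟩
  have h1 : (A.out q)^[m + 1] = (A.out q)^[n + 1] := congrArg Prod.fst heq
  have h2 : (fun b => ∀ i < m + 1, A.next q ((A.out q)^[i] b) = q) =
      (fun b => ∀ i < n + 1, A.next q ((A.out q)^[i] b) = q) := congrArg Prod.snd heq
  funext w
  rw [myActEnd_pow_apply, myActEnd_pow_apply]
  induction w with
  | nil => simp [Function.iterate_fixed (show A.act q [] = [] from rfl)]
  | cons b w ih =>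
    rw [myKey A q z hq hzf hzz hfz, myKey A q z hq hzf hzz hfz, congrFun h1 b]
    exact congrArg _ (if_congr (iff_of_eq (congrFun h2 b)) ih rfl)


/-- If `Σ(𝒜)` has a zero element, represented by the state `z`, and the state `q`
recurses only to itself and `z`, then the action of `q` is a periodic element of
`Σ(𝒜)`. -/
theorem act_periodic_of_recurses_to_self_and_zero
    (A : MealyAutomaton) (q z : A.Q)
    (hzero : ∀ s ∈ automatonSemigroup A,
      A.actEnd z * s = A.actEnd z ∧ s * A.actEnd z = A.actEnd z)
    (hq : ∀ b : A.B, A.next q b = q ∨ A.next q b = z) :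
    ∃ m n : ℕ, 0 < m ∧ m < n ∧ A.actEnd q ^ m = A.actEnd q ^ n :=
  my_main A q z hzero hq
end

section
/- Let S be a nonempty additive subsemigroup of ℕ with 0 ∉ S (i.e., a nonempty set of positive integers closed under addition). Then S, regarded as a semigroup under addition, is not an automaton semigroup, i.e., S is not isomorphic (as a semigroup) to Σ(𝒜) for any Mealy automaton 𝒜. -/
namespace MealyAutomaton

variable (A : MealyAutomaton)

theorem act_nil (q : A.Q) : A.act q [] = [] := rfl

theorem act_cons (q : A.Q) (b : A.B) (w : List A.B) :
    A.act q (b :: w) = A.out q b :: A.act (A.next q b) w := rfl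

/-- composite action of a list of states (leftmost acts last). -/
def actList : List A.Q → List A.B → List A.B
  | [], w => w
  | q :: L, w => A.act q (actList L w)

/-- the output letter of a composite on a single letter. -/
def outList : List A.Q → A.B → A.B
  | [], b => b
  | q :: L, b => A.out q (outList L b)

/-- the list of states after processing one letter. -/
def stepList : List A.Q → A.B → List A.Q
  | [], _ => []
  | q :: L, b => A.next q (A.outList L b) :: stepList L b

theorem actList_nil_word (L : List A.Q) : A.actList L [] = [] := by
  induction L with
  | nil => rfl
  | cons q L ih => show A.act q (A.actList L []) = []; rw [ih]; rfl

theorem actList_letter (L : List A.Q) (b : A.B) (w : List A.B) :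
    A.actList L (b :: w) = A.outList L b :: A.actList (A.stepList L b) w := by
  induction L with
  | nil => rfl
  | cons q L ih =>
    show A.act q (A.actList L (b :: w)) = _
    rw [ih, act_cons]
    rfl

theorem actList_append (L₁ L₂ : List A.Q) (w : List A.B) :
    A.actList (L₁ ++ L₂) w = A.actList L₁ (A.actList L₂ w) := by
  induction L₁ with
  | nil => rfl
  | cons q L ih => exact congrArg (A.act q) ih

theorem stepList_length (L : List A.Q) (b : A.B) : (A.stepList L b).length = L.length := by
  induction L with
  | nil => rfl
  | cons q L ih => show _ + 1 = _ + 1; rw [ih]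

def stepListW (L : List A.Q) (v : List A.B) : List A.Q :=
  v.foldl (fun L b => A.stepList L b) L

theorem stepListW_nil (L : List A.Q) : A.stepListW L [] = L := rfl

theorem stepListW_cons (L : List A.Q) (b : A.B) (v : List A.B) :
    A.stepListW L (b :: v) = A.stepListW (A.stepList L b) v := rfl

theorem stepListW_length (L : List A.Q) (v : List A.B) :
    (A.stepListW L v).length = L.length := by
  induction v generalizing L with
  | nil => rfl
  | cons b v ih => rw [stepListW_cons, ih, stepList_length]

theorem stepList_ne_nil (L : List A.Q) (b : A.B) (h : L ≠ []) : A.stepList L b ≠ [] := by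
  cases L with
  | nil => exact absurd rfl h
  | cons q L => simp [stepList]

theorem stepListW_ne_nil (L : List A.Q) (v : List A.B) (h : L ≠ []) :
    A.stepListW L v ≠ [] := by
  intro hn
  have h2 := A.stepListW_length L v
  rw [hn] at h2
  exact h (List.length_eq_zero_iff.mp h2.symm)

theorem actList_singleton (q : A.Q) : A.actList [q] = A.act q := by
  funext w; rfl

theorem actList_mem (L : List A.Q) (h : L ≠ []) :
    (A.actList L : Function.End (List A.B)) ∈ automatonSemigroup A := by
  induction L with
  | nil => exact absurd rfl h
  | cons q L ih =>
    cases L with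
    | nil =>
      rw [actList_singleton]
      exact Subsemigroup.subset_closure ⟨q, rfl⟩
    | cons p L' =>
      have h1 : (A.act q : Function.End (List A.B)) ∈ automatonSemigroup A :=
        Subsemigroup.subset_closure ⟨q, rfl⟩
      have h3 := mul_mem h1 (ih (by simp))
      exact h3

theorem closure_repr {f : Function.End (List A.B)} (hf : f ∈ automatonSemigroup A) :
    ∃ L : List A.Q, L ≠ [] ∧ f = A.actList L := by
  induction hf using Subsemigroup.closure_induction with
  | mem g hg =>
    obtain ⟨q, rfl⟩ := hg
    exact ⟨[q], by simp, (A.actList_singleton q).symm⟩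
  | mul g h hg hh ihg ihh =>
    obtain ⟨L₁, h₁, rfl⟩ := ihg
    obtain ⟨L₂, h₂, rfl⟩ := ihh
    refine ⟨L₁ ++ L₂, by simp [h₁], ?_⟩
    funext w
    rw [actList_append]
    rfl

end MealyAutomaton

/-- No nonempty additive subsemigroup of `ℕ` consisting of positive integers is an
automaton semigroup. -/
theorem subsemigroup_of_nat_not_isAutomatonSemigroup
    (S : AddSubsemigroup ℕ)
    (hne : (S : Set ℕ).Nonempty)
    (h0 : (0 : ℕ) ∉ S) :
    ¬ IsAutomatonSemigroup (Multiplicative ↥S) := by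
  rintro ⟨A, ⟨e⟩⟩
  haveI := A.fintypeQ
  haveI := A.nonemptyQ
  haveI := A.fintypeB
  haveI := A.nonemptyB
  classical
  -- the realization map
  set a : ↥S → List A.B → List A.B :=
    fun x => ((e (Multiplicative.ofAdd x) : ↥(automatonSemigroup A)) : Function.End (List A.B))
    with ha_def
  have ha_mem : ∀ x : ↥S, (a x : Function.End (List A.B)) ∈ automatonSemigroup A :=
    fun x => (e (Multiplicative.ofAdd x)).2
  have ha_comp : ∀ x y : ↥S, ∀ w, a (x + y) w = a x (a y w) := by
    intro x y w
    show ((e (Multiplicative.ofAdd (x + y)) : ↥(automatonSemigroup A)) :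
        Function.End (List A.B)) w = _
    rw [show Multiplicative.ofAdd (x + y)
          = Multiplicative.ofAdd x * Multiplicative.ofAdd y from rfl, map_mul]
    rfl
  have ha_inj : Function.Injective a := by
    intro x y h
    have h1 : e (Multiplicative.ofAdd x) = e (Multiplicative.ofAdd y) := Subtype.ext h
    have h2 := e.injective h1
    exact Multiplicative.ofAdd.injective h2
  have ha_surj : ∀ f : Function.End (List A.B), f ∈ automatonSemigroup A → ∃ x, a x = f := by
    intro f hf
    refine ⟨Multiplicative.toAdd (e.symm ⟨f, hf⟩), ?_⟩
    show ((e (Multiplicative.ofAdd (Multiplicative.toAdd (e.symm ⟨f, hf⟩)))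
        : ↥(automatonSemigroup A)) : Function.End (List A.B)) = f
    rw [show Multiplicative.ofAdd (Multiplicative.toAdd (e.symm ⟨f, hf⟩)) = e.symm ⟨f, hf⟩ from rfl,
      e.apply_symm_apply]
  have hrepr : ∀ x : ↥S, ∃ L : List A.Q, L ≠ [] ∧ a x = A.actList L := by
    intro x
    obtain ⟨L, h1, h2⟩ := A.closure_repr (ha_mem x)
    exact ⟨L, h1, h2⟩
  have a_nil : ∀ x : ↥S, a x [] = [] := by
    intro x
    obtain ⟨L, hL, hx⟩ := hrepr x
    rw [hx]
    exact A.actList_nil_word L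
  -- sections
  have hsec : ∀ (x : ↥S) (b : A.B), ∃ (c : A.B) (y : ↥S), ∀ w, a x (b :: w) = c :: a y w := by
    intro x b
    obtain ⟨L, hL, hx⟩ := hrepr x
    obtain ⟨y, hy⟩ := ha_surj (A.actList (A.stepList L b))
      (A.actList_mem _ (A.stepList_ne_nil L b hL))
    refine ⟨A.outList L b, y, fun w => ?_⟩
    rw [hx, A.actList_letter, hy]
  choose O T hOT using hsec
  set Tw : ↥S → List A.B → ↥S := fun x v => v.foldl T x with hTw_def
  have Tw_nil : ∀ x, Tw x [] = x := fun _ => rfl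
  have Tw_cons : ∀ x b v, Tw x (b :: v) = Tw (T x b) v := fun _ _ _ => rfl
  have Tw_append : ∀ x u v, Tw x (u ++ v) = Tw (Tw x u) v := by
    intro x u v
    simp only [hTw_def, List.foldl_append]
  have Tw_snoc : ∀ x v b, Tw x (v ++ [b]) = T (Tw x v) b := by
    intro x v b
    rw [Tw_append]
    rfl
  have T_list : ∀ (x : ↥S) (L : List A.Q), L ≠ [] → a x = A.actList L →
      ∀ b, a (T x b) = A.actList (A.stepList L b) := by
    intro x L hL hx b
    funext w
    have h1 : a x (b :: w) = O x b :: a (T x b) w := hOT x b w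
    have h2 : a x (b :: w) = A.outList L b :: A.actList (A.stepList L b) w := by
      rw [hx, A.actList_letter]
    rw [h1] at h2
    injection h2 with h3 h4
  have Tw_list : ∀ (x : ↥S) (L : List A.Q), L ≠ [] → a x = A.actList L → ∀ v,
      a (Tw x v) = A.actList (A.stepListW L v) := by
    intro x L hL hx v
    induction v generalizing x L with
    | nil => exact hx
    | cons b v ih =>
      rw [Tw_cons, A.stepListW_cons]
      exact ih (T x b) (A.stepList L b) (A.stepList_ne_nil L b hL) (T_list x L hL hx b)
  -- values of states
  have hxq : ∀ q : A.Q, ∃ x : ↥S, a x = A.act q := by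
    intro q
    obtain ⟨x, hx⟩ := ha_surj (A.act q) (Subsemigroup.subset_closure ⟨q, rfl⟩)
    exact ⟨x, hx⟩
  choose xq hxq_spec using hxq
  set γ : A.Q → ℕ := fun q => (xq q : ℕ) with hγ_def
  have val_of : ∀ (L : List A.Q), L ≠ [] → ∀ x : ↥S, a x = A.actList L →
      (x : ℕ) = (L.map γ).sum := by
    intro L
    induction L with
    | nil => exact fun h => absurd rfl h
    | cons q L ih =>
      intro _ x hx
      cases L with
      | nil =>
        have h1 : a x = a (xq q) := by
          rw [hxq_spec, hx, A.actList_singleton]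
        have h2 := ha_inj h1
        rw [h2]
        simp [hγ_def]
      | cons p L' =>
        obtain ⟨y, hy⟩ := ha_surj (A.actList (p :: L')) (A.actList_mem _ (by simp))
        have hxy : a x = a (xq q + y) := by
          funext w
          rw [hx, ha_comp, hxq_spec, hy]
          rfl
        have hx_eq := ha_inj hxy
        have hval : (x : ℕ) = γ q + (y : ℕ) := by rw [hx_eq]; rfl
        rw [hval, ih (by simp) y hy]
        simp
  -- min and max state values
  have hQne : (Finset.univ : Finset A.Q).Nonempty := Finset.univ_nonempty
  set m₀ : ℕ := Finset.univ.inf' hQne γ with hm₀_def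
  obtain ⟨q₀, -, hq₀⟩ := Finset.exists_mem_eq_inf' hQne γ
  set M₁ : ℕ := Finset.univ.sup' hQne γ with hM₁_def
  have hγ_ge : ∀ q, m₀ ≤ γ q := fun q => Finset.inf'_le _ (Finset.mem_univ q)
  have hγ_le : ∀ q, γ q ≤ M₁ := fun q => Finset.le_sup' _ (Finset.mem_univ q)
  have hm₀_pos : 1 ≤ m₀ := by
    rcases Nat.eq_zero_or_pos m₀ with h | h
    · exfalso
      apply h0
      have hv : (xq q₀ : ℕ) = 0 := by
        have : γ q₀ = 0 := by omega
        simpa [hγ_def] using this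
      have := (xq q₀).2
      rwa [hv] at this
    · exact h
  have sum_ge : ∀ L : List A.Q, L.length * m₀ ≤ (L.map γ).sum := by
    intro L
    induction L with
    | nil => simp
    | cons q L ih =>
      have := hγ_ge q
      simp only [List.length_cons, List.map_cons, List.sum_cons, Nat.succ_mul]
      omega
  have sum_le : ∀ L : List A.Q, (L.map γ).sum ≤ L.length * M₁ := by
    intro L
    induction L with
    | nil => simp
    | cons q L ih =>
      have := hγ_le q
      simp only [List.length_cons, List.map_cons, List.sum_cons, Nat.succ_mul]
      omega
  -- elements realized by replicated minimal states
  have rep_elem : ∀ j : ℕ, 1 ≤ j →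
      ∃ x : ↥S, a x = A.actList (List.replicate j q₀) ∧ (x : ℕ) = j * m₀ := by
    intro j hj
    induction j with
    | zero => omega
    | succ j ih =>
      rcases Nat.eq_zero_or_pos j with h | h
      · subst h
        refine ⟨xq q₀, ?_, ?_⟩
        · rw [hxq_spec]
          rw [show List.replicate 1 q₀ = [q₀] from rfl, A.actList_singleton]
        · have : γ q₀ = (xq q₀ : ℕ) := rfl
          omega
      · obtain ⟨x, hx1, hx2⟩ := ih h
        refine ⟨xq q₀ + x, ?_, ?_⟩
        · funext w
          rw [ha_comp, hxq_spec, hx1, List.replicate_succ]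
          rfl
        · have hcoe : ((xq q₀ + x : ↥S) : ℕ) = (xq q₀ : ℕ) + (x : ℕ) := rfl
          have : γ q₀ = (xq q₀ : ℕ) := rfl
          rw [hcoe, hx2]
          have : (xq q₀ : ℕ) = m₀ := by omega
          rw [this]
          ring
  -- the residue constant
  set gres : ℕ → ℕ := fun ρ => sInf {u : ℕ | u ∈ S ∧ u % m₀ = ρ} with hgres_def
  set G : ℕ := (Finset.range m₀).sup gres with hG_def
  -- the key lower bound on values of iterated sections
  have lemD : ∀ x : ↥S, G + m₀ + 1 ≤ (x : ℕ) → ∀ v, (x : ℕ) ≤ ((Tw x v : ↥S) : ℕ) + G := by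
    intro x hx v
    set s : ℕ := (x : ℕ) with hs_def
    have hset : s ∈ {u : ℕ | u ∈ S ∧ u % m₀ = s % m₀} := ⟨x.2, rfl⟩
    set t : ℕ := gres (s % m₀) with ht_def
    have htmem : t ∈ {u : ℕ | u ∈ S ∧ u % m₀ = s % m₀} := Nat.sInf_mem ⟨s, hset⟩
    have ht_le_s : t ≤ s := Nat.sInf_le hset
    have ht_le_G : t ≤ G := by
      have : s % m₀ ∈ Finset.range m₀ := Finset.mem_range.mpr (Nat.mod_lt _ (by omega))
      exact Finset.le_sup (f := gres) this
    have hdvd : m₀ ∣ s - t := (Nat.modEq_iff_dvd' ht_le_s).mp htmem.2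
    set j : ℕ := (s - t) / m₀ with hj_def
    have hjm : j * m₀ = s - t := by
      rw [hj_def, Nat.div_mul_cancel hdvd]
    have hj1 : 1 ≤ j := by
      rcases Nat.eq_zero_or_pos j with h | h
      · rw [h] at hjm; omega
      · exact h
    obtain ⟨X, hX1, hX2⟩ := rep_elem j hj1
    obtain ⟨Lt, hLt, ht_repr⟩ := hrepr ⟨t, htmem.1⟩
    have hx_split : x = X + ⟨t, htmem.1⟩ := by
      apply Subtype.ext
      have hcoe : ((X + (⟨t, htmem.1⟩ : ↥S) : ↥S) : ℕ) = (X : ℕ) + t := rfl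
      rw [hcoe, hX2]
      omega
    have hx_list : a x = A.actList (List.replicate j q₀ ++ Lt) := by
      funext w
      rw [hx_split, ha_comp, hX1, ht_repr, ← A.actList_append]
    have hne_rep : List.replicate j q₀ ++ Lt ≠ [] := by
      simp [hLt]
    have hTwl := Tw_list x _ hne_rep hx_list v
    have hval := val_of _ (A.stepListW_ne_nil _ v hne_rep) (Tw x v) hTwl
    have hlen : (A.stepListW (List.replicate j q₀ ++ Lt) v).length = j + Lt.length := by
      rw [A.stepListW_length]
      simp
    have hge := sum_ge (A.stepListW (List.replicate j q₀ ++ Lt) v)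
    rw [hlen] at hge
    have hLt_len : 1 ≤ Lt.length := List.length_pos_iff.mpr hLt
    have hmul : (j + 1) * m₀ ≤ (j + Lt.length) * m₀ :=
      Nat.mul_le_mul_right _ (by omega)
    have : (j + 1) * m₀ = j * m₀ + m₀ := by ring
    omega
  -- good elements: value ≥ K, and all iterated sections within a window of width G
  have exists_good : ∀ K : ℕ, ∃ x : ↥S, K ≤ (x : ℕ) ∧
      ∀ v, ((Tw x v : ↥S) : ℕ) ≤ (x : ℕ) ∧ (x : ℕ) ≤ ((Tw x v : ↥S) : ℕ) + G := by
    intro K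
    obtain ⟨n, hn1, hn2⟩ := rep_elem (K + G + m₀ + 1) (by omega)
    have hn_big : K + G + m₀ + 1 ≤ (n : ℕ) := by
      rw [hn2]
      calc K + G + m₀ + 1 = (K + G + m₀ + 1) * 1 := by ring
        _ ≤ (K + G + m₀ + 1) * m₀ := Nat.mul_le_mul_left _ hm₀_pos
    set V : Set ℕ := Set.range (fun v : List A.B => ((Tw n v : ↥S) : ℕ)) with hV_def
    have hV_ne : V.Nonempty := ⟨(n : ℕ), ⟨[], rfl⟩⟩
    have hV_bdd : BddAbove V := by
      obtain ⟨L, hL, hLr⟩ := hrepr n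
      refine ⟨L.length * M₁, ?_⟩
      rintro u ⟨v, rfl⟩
      show ((Tw n v : ↥S) : ℕ) ≤ L.length * M₁
      rw [val_of _ (A.stepListW_ne_nil L v hL) _ (Tw_list n L hL hLr v)]
      have := sum_le (A.stepListW L v)
      rwa [A.stepListW_length] at this
    have hs'_mem : sSup V ∈ V := Nat.sSup_mem hV_ne hV_bdd
    obtain ⟨w₀, hw₀⟩ := hs'_mem
    have hw₀' : ((Tw n w₀ : ↥S) : ℕ) = sSup V := hw₀
    have hn_le : (n : ℕ) ≤ sSup V := le_csSup hV_bdd ⟨[], rfl⟩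
    refine ⟨Tw n w₀, by omega, ?_⟩
    intro v
    constructor
    · have hmem : ((Tw (Tw n w₀) v : ↥S) : ℕ) ∈ V := by
        refine ⟨w₀ ++ v, ?_⟩
        show ((Tw n (w₀ ++ v) : ↥S) : ℕ) = _
        rw [Tw_append]
      have := le_csSup hV_bdd hmem
      omega
    · exact lemD (Tw n w₀) (by omega) v
  choose good hgood_ge hgood_win using exists_good
  -- a strictly increasing sequence of good elements
  set seq : ℕ → ↥S := fun i => Nat.rec (good 0) (fun _ x => good ((x : ℕ) + 1)) i with hseq_def
  have hseq_succ : ∀ i, seq (i + 1) = good ((seq i : ℕ) + 1) := fun _ => rfl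
  have hseq_mono : StrictMono (fun i => ((seq i : ↥S) : ℕ)) := by
    apply strictMono_nat_of_lt_succ
    intro i
    have := hgood_ge ((seq i : ℕ) + 1)
    rw [hseq_succ]
    omega
  have hseq_win : ∀ i v, ((Tw (seq i) v : ↥S) : ℕ) ≤ ((seq i : ↥S) : ℕ) ∧
      ((seq i : ↥S) : ℕ) ≤ ((Tw (seq i) v : ↥S) : ℕ) + G := by
    intro i
    cases i with
    | zero => exact hgood_win 0
    | succ i => exact hgood_win _
  -- the "shape" of the windowed orbit automaton
  set shape : ↥S → Fin (G + 1) → Option ((A.B → A.B) × (A.B → Fin (G + 1))) := fun x δ =>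
    if h : ∃ v, ((Tw x v : ↥S) : ℕ) + (δ : ℕ) = (x : ℕ) then
      some (fun b => O (Tw x h.choose) b,
        fun b => ⟨min ((x : ℕ) - ((Tw x (h.choose ++ [b]) : ↥S) : ℕ)) G,
          Nat.lt_succ_of_le (min_le_right _ _)⟩)
    else none
    with hshape_def
  -- pigeonhole
  haveI : Finite A.B := Finite.of_fintype A.B
  obtain ⟨i, j, hij, hsh⟩ :=
    Finite.exists_ne_map_eq_of_infinite (fun i : ℕ => shape (seq i))
  have hsh' : shape (seq i) = shape (seq j) := hsh
  -- the two elements act identically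
  have main : ∀ (w : List A.B) (δ : Fin (G + 1)) (v₁ v₂ : List A.B),
      ((Tw (seq i) v₁ : ↥S) : ℕ) + (δ : ℕ) = ((seq i : ↥S) : ℕ) →
      ((Tw (seq j) v₂ : ↥S) : ℕ) + (δ : ℕ) = ((seq j : ↥S) : ℕ) →
      a (Tw (seq i) v₁) w = a (Tw (seq j) v₂) w := by
    intro w
    induction w with
    | nil =>
      intro δ v₁ v₂ h1 h2
      rw [a_nil, a_nil]
    | cons b w ih =>
      intro δ v₁ v₂ h1 h2
      have hx_ex : ∃ v, ((Tw (seq i) v : ↥S) : ℕ) + (δ : ℕ) = ((seq i : ↥S) : ℕ) := ⟨v₁, h1⟩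
      have hy_ex : ∃ v, ((Tw (seq j) v : ↥S) : ℕ) + (δ : ℕ) = ((seq j : ↥S) : ℕ) := ⟨v₂, h2⟩
      have hcx : Tw (seq i) hx_ex.choose = Tw (seq i) v₁ := by
        apply Subtype.ext
        have := hx_ex.choose_spec
        omega
      have hcy : Tw (seq j) hy_ex.choose = Tw (seq j) v₂ := by
        apply Subtype.ext
        have := hy_ex.choose_spec
        omega
      have hδ := congrFun hsh' δ
      simp only [hshape_def] at hδ
      rw [dif_pos hx_ex, dif_pos hy_ex, Option.some.injEq, Prod.mk.injEq] at hδ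
      obtain ⟨hcol, htr⟩ := hδ
      -- heads agree
      have hhead : O (Tw (seq i) v₁) b = O (Tw (seq j) v₂) b := by
        rw [← hcx, ← hcy]
        exact congrFun hcol b
      -- section elements
      have hsx : Tw (seq i) (hx_ex.choose ++ [b]) = Tw (seq i) (v₁ ++ [b]) := by
        rw [Tw_snoc, Tw_snoc, hcx]
      have hsy : Tw (seq j) (hy_ex.choose ++ [b]) = Tw (seq j) (v₂ ++ [b]) := by
        rw [Tw_snoc, Tw_snoc, hcy]
      have hwinx := hseq_win i (v₁ ++ [b])
      have hwiny := hseq_win j (v₂ ++ [b])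
      have htrb := congrFun htr b
      have htrb' : min (((seq i : ↥S) : ℕ) - ((Tw (seq i) (hx_ex.choose ++ [b]) : ↥S) : ℕ)) G
          = min (((seq j : ↥S) : ℕ) - ((Tw (seq j) (hy_ex.choose ++ [b]) : ↥S) : ℕ)) G :=
        congrArg Fin.val htrb
      rw [hsx, hsy] at htrb'
      have hminx : min (((seq i : ↥S) : ℕ) - ((Tw (seq i) (v₁ ++ [b]) : ↥S) : ℕ)) G
          = ((seq i : ↥S) : ℕ) - ((Tw (seq i) (v₁ ++ [b]) : ↥S) : ℕ) :=
        min_eq_left (by omega)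
      have hminy : min (((seq j : ↥S) : ℕ) - ((Tw (seq j) (v₂ ++ [b]) : ↥S) : ℕ)) G
          = ((seq j : ↥S) : ℕ) - ((Tw (seq j) (v₂ ++ [b]) : ↥S) : ℕ) :=
        min_eq_left (by omega)
      set d : ℕ := ((seq i : ↥S) : ℕ) - ((Tw (seq i) (v₁ ++ [b]) : ↥S) : ℕ) with hd_def
      have hd_le : d ≤ G := by omega
      have hd_eq : ((seq j : ↥S) : ℕ) - ((Tw (seq j) (v₂ ++ [b]) : ↥S) : ℕ) = d := by
        omega
      have ihap := ih ⟨d, by omega⟩ (v₁ ++ [b]) (v₂ ++ [b]) (by simp; omega) (by simp; omega)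
      -- assemble
      rw [hOT, hOT, hhead]
      have ht1 : T (Tw (seq i) v₁) b = Tw (seq i) (v₁ ++ [b]) := (Tw_snoc _ _ _).symm
      have ht2 : T (Tw (seq j) v₂) b = Tw (seq j) (v₂ ++ [b]) := (Tw_snoc _ _ _).symm
      rw [ht1, ht2, ihap]
  have hkey : a (seq i) = a (seq j) := by
    funext w
    have h1 : ((Tw (seq i) [] : ↥S) : ℕ) + ((⟨0, by omega⟩ : Fin (G + 1)) : ℕ)
        = ((seq i : ↥S) : ℕ) := by
      rw [Tw_nil]
      rfl
    have h2 : ((Tw (seq j) [] : ↥S) : ℕ) + ((⟨0, by omega⟩ : Fin (G + 1)) : ℕ)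
        = ((seq j : ↥S) : ℕ) := by
      rw [Tw_nil]
      rfl
    have := main w ⟨0, by omega⟩ [] [] h1 h2
    rw [Tw_nil, Tw_nil] at this
    exact this
  have : seq i = seq j := ha_inj hkey
  have : ((seq i : ↥S) : ℕ) = ((seq j : ↥S) : ℕ) := by rw [this]
  exact hij (hseq_mono.injective this)
end

section
/- Let S be a nonempty additive subsemigroup of ℕ with 0 ∉ S such that the greatest common divisor of the elements of S is 1. Then the complement ℕ \ S is finite, i.e., S contains all but finitely many natural numbers. -/
private lemma aux_mul_mem (S : AddSubsemigroup ℕ) {x : ℕ} (hx : x ∈ S) :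
    ∀ k : ℕ, k ≠ 0 → k * x ∈ S := by
  intro k hk
  induction k with
  | zero => exact absurd rfl hk
  | succ n ih =>
    rcases Nat.eq_zero_or_pos n with h | h
    · subst h; simpa using hx
    · have := S.add_mem (ih h.ne') hx
      simpa [Nat.succ_mul] using this

private lemma aux_memM (S : AddSubsemigroup ℕ) {x : ℕ}
    (hx : x ∈ AddSubmonoid.closure (S : Set ℕ)) : x = 0 ∨ x ∈ S := by
  induction hx using AddSubmonoid.closure_induction with
  | mem y hy => exact Or.inr hy
  | zero => exact Or.inl rfl
  | add a b _ _ ha hb =>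
    rcases ha with ha | ha
    · rcases hb with hb | hb
      · left; simp [ha, hb]
      · right; simpa [ha] using hb
    · rcases hb with hb | hb
      · right; simpa [hb] using ha
      · exact Or.inr (S.add_mem ha hb)

private lemma aux_diff (S : AddSubsemigroup ℕ) {g : ℤ}
    (hg : g ∈ AddSubgroup.closure ((Nat.cast : ℕ → ℤ) '' (S : Set ℕ))) :
    ∃ a b : ℕ, a ∈ AddSubmonoid.closure (S : Set ℕ) ∧
      b ∈ AddSubmonoid.closure (S : Set ℕ) ∧ g = (a : ℤ) - b := by
  induction hg using AddSubgroup.closure_induction with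
  | mem y hy =>
    obtain ⟨s, hs, rfl⟩ := hy
    exact ⟨s, 0, AddSubmonoid.subset_closure hs, (AddSubmonoid.closure _).zero_mem, by simp⟩
  | zero => exact ⟨0, 0, (AddSubmonoid.closure _).zero_mem, (AddSubmonoid.closure _).zero_mem, by simp⟩
  | add p q _ _ hp hq =>
    obtain ⟨a, b, ha, hb, rfl⟩ := hp
    obtain ⟨c, d, hc, hd, rfl⟩ := hq
    exact ⟨a + c, b + d, AddSubmonoid.add_mem _ ha hc, AddSubmonoid.add_mem _ hb hd, by push_cast; ring⟩
  | neg p _ hp =>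
    obtain ⟨a, b, ha, hb, rfl⟩ := hp
    exact ⟨b, a, hb, ha, by ring⟩

/-- A nonempty additive subsemigroup of `ℕ` consisting of positive integers whose
elements have greatest common divisor `1` contains all but finitely many natural
numbers. -/
theorem addSubsemigroup_nat_cofinite_of_gcd_one
    (S : AddSubsemigroup ℕ)
    (hne : (S : Set ℕ).Nonempty)
    (h0 : (0 : ℕ) ∉ S)
    (hgcd : ∀ d : ℕ, (∀ x ∈ S, d ∣ x) → d = 1) :
    {n : ℕ | n ∉ S}.Finite := by
  set H := AddSubgroup.closure ((Nat.cast : ℕ → ℤ) '' (S : Set ℕ)) with hH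
  obtain ⟨g, hgH⟩ := Int.subgroup_cyclic H
  -- g.natAbs divides every element of S
  have hdvd : ∀ x ∈ S, g.natAbs ∣ x := by
    intro x hx
    have hxH : (x : ℤ) ∈ H := AddSubgroup.subset_closure ⟨x, hx, rfl⟩
    rw [hgH, AddSubgroup.mem_closure_singleton] at hxH
    obtain ⟨n, hn⟩ := hxH
    have : g ∣ (x : ℤ) := Dvd.intro_left _ (by simpa [zsmul_eq_mul] using hn)
    exact Int.natAbs_dvd_natAbs.mpr (by simpa using this)
  have hone : g.natAbs = 1 := hgcd _ hdvd
  -- 1 ∈ H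
  have h1H : (1 : ℤ) ∈ H := by
    have hgmem : g ∈ H := by
      rw [hgH]; exact AddSubgroup.subset_closure rfl
    have hg1 : g = 1 ∨ g = -1 := by
      rcases Int.natAbs_eq g with h | h <;> rw [hone] at h
      · left; simpa using h
      · right; simpa using h
    rcases hg1 with h | h
    · rwa [h] at hgmem
    · have := H.neg_mem hgmem
      rw [h] at this; simpa using this
  obtain ⟨a, b, ha, hb, hab⟩ := aux_diff S h1H
  have hab' : a = b + 1 := by
    have : (a : ℤ) = (b : ℤ) + 1 := by linarith [hab]
    exact_mod_cast this
  rcases aux_memM S hb with hb0 | hbS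
  · -- b = 0, so a = 1 ∈ S
    subst hb0
    have h1S : (1 : ℕ) ∈ S := by
      rcases aux_memM S ha with h | h
      · omega
      · simpa [hab'] using h
    apply Set.Finite.subset (Set.finite_Iio 1)
    intro n hn
    simp only [Set.mem_setOf_eq] at hn
    by_contra hlt
    simp only [Set.mem_Iio, not_lt] at hlt
    exact hn (by simpa using aux_mul_mem S h1S n (by omega))
  · -- b ∈ S, b ≥ 1, a = b + 1 ∈ S
    have hbpos : 0 < b := Nat.pos_of_ne_zero (by rintro rfl; exact h0 hbS)
    have haS : a ∈ S := by
      rcases aux_memM S ha with h | h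
      · omega
      · exact h
    have key : ∀ n, b * b ≤ n → n ∈ S := by
      intro n hn
      set r := n % b with hrdef
      set q := n / b with hqdef
      have hr : r < b := Nat.mod_lt _ hbpos
      have hq : b ≤ q := (Nat.le_div_iff_mul_le hbpos).mpr (by nlinarith)
      have hqr : r ≤ q := le_of_lt (lt_of_lt_of_le hr hq)
      have hdecomp : n = (q - r) * b + r * a := by
        rw [hab', Nat.sub_mul, Nat.mul_add, Nat.mul_one, ← Nat.add_assoc,
          Nat.sub_add_cancel (Nat.mul_le_mul_right _ hqr), Nat.mul_comm q b]
        exact (Nat.div_add_mod n b).symm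
      rcases Nat.eq_zero_or_pos r with hr0 | hr0
      · rw [hdecomp, hr0]
        simp only [Nat.sub_zero, Nat.zero_mul, Nat.add_zero]
        exact aux_mul_mem S hbS q (by omega)
      · rw [hdecomp]
        exact S.add_mem (aux_mul_mem S hbS _ (by omega)) (aux_mul_mem S haS _ (by omega))
    apply Set.Finite.subset (Set.finite_Iio (b * b))
    intro n hn
    simp only [Set.mem_setOf_eq] at hn
    by_contra hlt
    simp only [Set.mem_Iio, not_lt] at hlt
    exact hn (key n hlt)
end
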